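/- Let δ be a signpost sequence. (a) If δ(1) > 0, there exists a two-dimensional instance T_δ = (P, J, φ) with P strictly positive, column marginals φ_f = φ_m, a fair share F, and a unique δ-biproportional solution x, such that the fraction of rows i for which the rounded fair share is violated (i.e., x_{it} ∉ [⌊F_{it}⌋, ⌈F_{it}⌉] for some type t) is at least 1/(1 + ⌈δ(1)^{−2} + 1⌉). (b) If δ(1) = 0, there exists such an instance with three rows, column marginals φ_f = φ_m, and the fraction of violating rows at least 1/3. -/

import Mathlib

open Finset

/-- A signpost sequence: `γ 0 = 0`, `γ n ∈ [n-1, n]` for `n ≥ 1`, and the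
disjunction property. -/
def Signpost (γ : ℕ → ℝ) : Prop :=
  γ 0 = 0 ∧
  (∀ n : ℕ, 1 ≤ n → ((n : ℝ) - 1 ≤ γ n ∧ γ n ≤ n)) ∧
  ((∃ k : ℕ, 2 ≤ k ∧ γ k = (k : ℝ) - 1) → ∀ l : ℕ, 1 ≤ l → γ l < l) ∧
  ((∃ k : ℕ, 1 ≤ k ∧ γ k = (k : ℝ)) → ∀ l : ℕ, 2 ≤ l → (l : ℝ) - 1 < γ l)

/-- The rounding rule `R_γ` of a signpost sequence, as a set-valued map:
`R_γ(0) = {0}`, `R_γ(t) = {n}` for `t ∈ (γ n, γ (n+1))`, and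
`R_γ(t) = {n-1, n}` when `t = γ n > 0`. -/
def roundSet (γ : ℕ → ℝ) (t : ℝ) : Set ℕ :=
  {k | (t = 0 ∧ k = 0) ∨ (γ k < t ∧ t < γ (k + 1)) ∨ (0 < t ∧ (t = γ k ∨ t = γ (k + 1)))}

/-- The divisor method solution set `A_γ(Q, h)`. -/
def divisorSet (γ : ℕ → ℝ) {n : ℕ} (Q : Fin n → ℝ) (h : ℕ) : Set (Fin n → ℕ) :=
  {S | (∑ i, S i) = h ∧ ∃ lam : ℝ, 0 < lam ∧ ∀ i, S i ∈ roundSet γ (Q i / lam)}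

/-- The two candidate types. -/
inductive MType
  | f | m
deriving DecidableEq

instance instFintypeMType : Fintype MType where
  elems := {MType.f, MType.m}
  complete := by intro x; cases x <;> simp

/-- The other type. -/
def MType.other : MType → MType
  | .f => .m
  | .m => .f

/-- An instance of the apportionment problem with type parity: a finite candidate
set `C`, a party map, a (nonnegative real) vote map, a type map, a house size
`h ≥ 1` and a total order (the field `ord`) refining the votes. -/
structure TypedInstance (n : ℕ) (C : Type) [Fintype C] [DecidableEq C] where
  ord : LinearOrder C
  party : C → Fin n
  votes : C → ℝ
  votes_nonneg : ∀ c, 0 ≤ votes c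
  mtype : C → MType
  h : ℕ
  h_pos : 1 ≤ h
  refines : ∀ c c' : C, votes c' < votes c → ord.lt c' c

namespace TypedInstance

variable {n : ℕ} {C : Type} [Fintype C] [DecidableEq C]

/-- The candidates of party `i`. -/
def Ci (I : TypedInstance n C) (i : Fin n) : Finset C :=
  univ.filter fun c => I.party c = i

/-- The candidates of type `t`. -/
def Ct (I : TypedInstance n C) (t : MType) : Finset C :=
  univ.filter fun c => I.mtype c = t

/-- The candidates of party `i` and type `t`. -/
def Cit (I : TypedInstance n C) (i : Fin n) (t : MType) : Finset C :=
  univ.filter fun c => I.party c = i ∧ I.mtype c = t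

/-- The party vote totals `Q(I)`. -/
def Q (I : TypedInstance n C) : Fin n → ℝ := fun i => ∑ c ∈ I.Ci i, I.votes c

/-- The party × type vote totals `P(I)`. -/
def P (I : TypedInstance n C) : Fin n → MType → ℝ := fun i t => ∑ c ∈ I.Cit i t, I.votes c

/-- The supply matrix `S(I)`. -/
def S (I : TypedInstance n C) : Fin n → MType → ℕ := fun i t => (I.Cit i t).card

/-- The supply condition: `|C_i^t| ≥ ⌈h/2⌉` for every party `i` and type `t`. -/
def SupplyCond (I : TypedInstance n C) : Prop :=
  ∀ (i : Fin n) (t : MType), (I.h + 1) / 2 ≤ (I.Cit i t).card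

/-- Type parity condition (A): the numbers of elected candidates of the two types
differ by exactly `h mod 2`. Allocations are represented by the finset of elected
candidates. -/
def CondA (I : TypedInstance n C) (E : Finset C) : Prop :=
  (((E.filter fun c => I.mtype c = MType.f).card : ℤ) -
    ((E.filter fun c => I.mtype c = MType.m).card : ℤ)).natAbs = I.h % 2

instance (I : TypedInstance n C) (E : Finset C) : Decidable (I.CondA E) := by
  unfold CondA; infer_instance

/-- The number of elected candidates of each party. -/
def partyCount (I : TypedInstance n C) (E : Finset C) : Fin n → ℕ :=
  fun i => (E.filter fun c => I.party c = i).card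

/-- The number of elected candidates of each type. -/
def typeCount (I : TypedInstance n C) (E : Finset C) : MType → ℕ :=
  fun t => (E.filter fun c => I.mtype c = t).card

/-- Party proportionality condition (B) w.r.t. a signpost sequence `γ`. -/
def CondB (I : TypedInstance n C) (γ : ℕ → ℝ) (E : Finset C) : Prop :=
  ∃ J ∈ divisorSet γ I.Q I.h, ∀ i, I.partyCount E i = J i

/-- The set `X(I, γ)` of feasible allocations. -/
def X (I : TypedInstance n C) (γ : ℕ → ℝ) : Set (Finset C) :=
  {E | I.CondA E ∧ I.CondB γ E}

/-- The polytope `Z(I, J, γ)` of fractional allocations. -/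
def Z (I : TypedInstance n C) (J : Fin n → ℕ) : Set (Fin n → MType → ℝ) :=
  {y | (∀ t : MType, ((I.h / 2 : ℕ) : ℝ) ≤ ∑ i, y i t) ∧
       (∀ i : Fin n, y i MType.f + y i MType.m = (J i : ℝ)) ∧
       (∀ (i : Fin n) (t : MType), 0 ≤ y i t ∧ y i t ≤ ((I.Cit i t).card : ℝ))}

/-- The scaled instance `αI` (same candidate order). -/
def scale (I : TypedInstance n C) (α : ℝ) (hα : 0 < α) : TypedInstance n C where
  ord := I.ord
  party := I.party
  votes := fun c => α * I.votes c
  votes_nonneg := fun c => mul_nonneg hα.le (I.votes_nonneg c)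
  mtype := I.mtype
  h := I.h
  h_pos := I.h_pos
  refines := fun c c' hlt => I.refines c c' (by nlinarith [hlt, hα])

/-- `G` is a voting increment of `I` in candidate `c`: identical to `I` except
that `c` garners strictly more votes. -/
def VotingIncrement (I G : TypedInstance n C) (c : C) : Prop :=
  G.party = I.party ∧ G.mtype = I.mtype ∧ G.h = I.h ∧
  I.votes c < G.votes c ∧ ∀ c' : C, c' ≠ c → G.votes c' = I.votes c'

/-- The rank of a candidate in the order `≻`: position `1` is the top candidate. -/
def rank (I : TypedInstance n C) (c : C) : ℕ :=
  letI := I.ord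
  (univ.filter fun c' => c ≤ c').card

/-- The top `k` candidates of a subset `D` according to the order of `I`. -/
def topOf (I : TypedInstance n C) (D : Finset C) (k : ℕ) : Finset C :=
  letI := I.ord
  D.filter fun c => (D.filter fun c' => c ≤ c').card ≤ k

/-- The type-oblivious solution `T_J`: in every party `i`, the top `J i`
candidates of `C_i` are elected. -/
def oblivious (I : TypedInstance n C) (J : Fin n → ℕ) : Finset C :=
  univ.filter fun c => c ∈ I.topOf (I.Ci (I.party c)) (J (I.party c))

/-- The over-represented type of an allocation (type `f` in case of a tie). -/
def overType (I : TypedInstance n C) (E : Finset C) : MType :=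
  if I.typeCount E MType.m ≤ I.typeCount E MType.f then MType.f else MType.m

/-- One parity-correction swap: the worst-ranked elected candidate of the
over-represented type is replaced by the best-ranked unelected candidate of the
same party and of the under-represented type (if any; otherwise nothing happens). -/
def swapStep (I : TypedInstance n C) (E : Finset C) : Finset C :=
  letI := I.ord
  let t := I.overType E
  let elected := E.filter fun c => I.mtype c = t
  if hE : elected.Nonempty then
    let s := elected.min' hE
    let pool := univ.filter fun c => c ∉ E ∧ I.party c = I.party s ∧ I.mtype c = t.other
    if hp : pool.Nonempty then insert (pool.max' hp) (E.erase s) else E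
  else E

/-- The parity-correction loop (with fuel). -/
def greedyAux (I : TypedInstance n C) : ℕ → Finset C → Finset C
  | 0, E => E
  | k + 1, E => if I.CondA E then E else greedyAux I k (I.swapStep E)

/-- The output `E_J` of the greedy & parity correction algorithm. -/
def greedy (I : TypedInstance n C) (J : Fin n → ℕ) : Finset C :=
  greedyAux I I.h (I.oblivious J)

/-- The greedy & parity correction mechanism `M^G`. -/
def MG (I : TypedInstance n C) (γ : ℕ → ℝ) : Set (Finset C) :=
  {E | ∃ J ∈ divisorSet γ I.Q I.h, E = I.greedy J}

/-- Two allocations agree on all candidates of rank at most `l`. -/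
def agreeUpTo (I : TypedInstance n C) (E₁ E₂ : Finset C) (l : ℕ) : Prop :=
  ∀ c : C, I.rank c ≤ l → (c ∈ E₁ ↔ c ∈ E₂)

instance (I : TypedInstance n C) (E₁ E₂ : Finset C) (l : ℕ) :
    Decidable (I.agreeUpTo E₁ E₂ l) := by
  unfold agreeUpTo; infer_instance

/-- The length of the common prefix of two allocations (w.r.t. the ranking). -/
def prefixLen (I : TypedInstance n C) (E₁ E₂ : Finset C) : ℕ :=
  ((Finset.range (Fintype.card C + 1)).filter fun l => I.agreeUpTo E₁ E₂ l).sup id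

/-- The vote-leading type (type `f` in case of a tie; this tie-breaking rule is
scaling invariant). -/
noncomputable def voteLeading (I : TypedInstance n C) : MType :=
  if (∑ c ∈ I.Ct MType.f, I.votes c) < (∑ c ∈ I.Ct MType.m, I.votes c) then MType.m
  else MType.f

/-- The parity marginal `φ(I)`: for even `h` both types get `h/2`; for odd `h` the
vote-leading type gets `⌈h/2⌉`. -/
noncomputable def parityMarginal (I : TypedInstance n C) : MType → ℕ :=
  fun t => if t = I.voteLeading then (I.h + 1) / 2 else I.h / 2

end TypedInstance

/-- `(x, lam, mu)` is a `δ`-biproportional solution of the two-dimensional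
instance with supply `(P, S, J, φ)`. -/
def IsBipropSol (δ : ℕ → ℝ) {n : ℕ} (P : Fin n → MType → ℝ) (S : Fin n → MType → ℕ)
    (J : Fin n → ℕ) (φ : MType → ℕ) (x : Fin n → MType → ℕ)
    (lam : Fin n → ℝ) (mu : MType → ℝ) : Prop :=
  (∀ i, 0 < lam i) ∧ (∀ t, 0 < mu t) ∧
  (∀ (i : Fin n) (t : MType), x i t < S i t → x i t ∈ roundSet δ (P i t * lam i * mu t)) ∧
  (∀ i : Fin n, x i MType.f + x i MType.m = J i) ∧
  (∀ t : MType, (∑ i, x i t) = φ t) ∧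
  (∀ (i : Fin n) (t : MType), x i t ≤ S i t)

/-- The set `B_δ(P, S, J, φ)` of `δ`-biproportional solutions. -/
def bipropSet (δ : ℕ → ℝ) {n : ℕ} (P : Fin n → MType → ℝ) (S : Fin n → MType → ℕ)
    (J : Fin n → ℕ) (φ : MType → ℕ) : Set (Fin n → MType → ℕ) :=
  {x | ∃ lam mu, IsBipropSol δ P S J φ x lam mu}

/-- `δ`-biproportional solutions of a two-dimensional instance `(P, J, φ)`
without supply bounds. -/
def IsBipropSolNS (δ : ℕ → ℝ) {n : ℕ} (P : Fin n → MType → ℝ)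
    (J : Fin n → ℕ) (φ : MType → ℕ) (x : Fin n → MType → ℕ)
    (lam : Fin n → ℝ) (mu : MType → ℝ) : Prop :=
  (∀ i, 0 < lam i) ∧ (∀ t, 0 < mu t) ∧
  (∀ (i : Fin n) (t : MType), x i t ∈ roundSet δ (P i t * lam i * mu t)) ∧
  (∀ i : Fin n, x i MType.f + x i MType.m = J i) ∧
  (∀ t : MType, (∑ i, x i t) = φ t)

/-- The set `B_δ(P, J, φ)` for instances without supply bounds. -/
def bipropSetNS (δ : ℕ → ℝ) {n : ℕ} (P : Fin n → MType → ℝ)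
    (J : Fin n → ℕ) (φ : MType → ℕ) : Set (Fin n → MType → ℕ) :=
  {x | ∃ lam mu, IsBipropSolNS δ P J φ x lam mu}

/-- `F` is a fair share (matrix scaling) of the two-dimensional instance
`(P, J, φ)`. -/
def IsFairShare {n : ℕ} (P : Fin n → MType → ℝ) (J : Fin n → ℕ) (φ : MType → ℕ)
    (F : Fin n → MType → ℝ) : Prop :=
  ∃ (lam : Fin n → ℝ) (mu : MType → ℝ),
    (∀ i, 0 < lam i) ∧ (∀ t, 0 < mu t) ∧ (∀ i t, 0 < F i t) ∧
    (∀ (i : Fin n) (t : MType), F i t = P i t * lam i * mu t) ∧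
    (∀ i : Fin n, F i MType.f + F i MType.m = (J i : ℝ)) ∧
    (∀ t : MType, (∑ i, F i t) = (φ t : ℝ))

namespace TypedInstance

variable {n : ℕ} {C : Type} [Fintype C] [DecidableEq C]

/-- The allocation `E_x` electing, for every party `i` and type `t`, the top
`x i t` candidates of `C_i^t`. -/
def allocOf (I : TypedInstance n C) (x : Fin n → MType → ℕ) : Finset C :=
  univ.filter fun c =>
    c ∈ I.topOf (I.Cit (I.party c) (I.mtype c)) (x (I.party c) (I.mtype c))

/-- The `δ`-biproportional parity mechanism `M^B_δ`. -/
def MB (I : TypedInstance n C) (δ γ : ℕ → ℝ) : Set (Finset C) :=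
  {E | ∃ J ∈ divisorSet γ I.Q I.h,
        ∃ x ∈ bipropSet δ I.P I.S J I.parityMarginal, E = I.allocOf x}

end TypedInstance

/-!
Both instances consist of one row `0` and `k` identical rows, and their matrix `P` already has
the prescribed row and column sums, so `F = P` is the fair share. The solution `x` gives row `0`
a number of `f`-seats outside `[⌊F 0 f⌋, ⌈F 0 f⌉] = {1}` (none when `δ 1 > 0`, two when
`δ 1 = 0`), so one of the `k + 1` rows violates its rounded fair share.

Uniqueness is the exchange argument: every solution with multipliers `λ, μ` satisfies
`δ (yᵢₜ) ≤ Pᵢₜ λᵢ μₜ ≤ δ (yᵢₜ + 1)`, and the cross products `(λᵢ μ_f) (λⱼ μ_m)` and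
`(λᵢ μ_m) (λⱼ μ_f)` coincide. Giving row `0` more `f`-seats than `x` forces some other row `j` to
give one up, and multiplying the four bounds for rows `0, j` yields `δ 1 ^ 2 (3m - 1) ^ 2 ≤ 9m`,
excluded by `m = ⌈δ 1⁻² + 1⌉`, resp. `25 δ 3 ≤ δ 4`, excluded by `δ 3 ≥ 2`, `δ 4 ≤ 4`.
-/

namespace Signpost

variable {δ : ℕ → ℝ}

lemma sub_one_le (hδ : Signpost δ) (n : ℕ) : (n : ℝ) - 1 ≤ δ n := by
  rcases Nat.eq_zero_or_pos n with rfl | hn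
  · simp [hδ.1]
  · exact (hδ.2.1 n hn).1

lemma le_self (hδ : Signpost δ) (n : ℕ) : δ n ≤ n := by
  rcases Nat.eq_zero_or_pos n with rfl | hn
  · simp [hδ.1]
  · exact (hδ.2.1 n hn).2

lemma nonneg (hδ : Signpost δ) (n : ℕ) : 0 ≤ δ n := by
  rcases Nat.eq_zero_or_pos n with rfl | hn
  · simp [hδ.1]
  · linarith [hδ.sub_one_le n, (Nat.one_le_cast (α := ℝ)).2 hn]

lemma monotone (hδ : Signpost δ) : Monotone δ := by
  refine monotone_nat_of_le_succ fun n => ?_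
  rcases Nat.eq_zero_or_pos n with rfl | -
  · simpa [hδ.1] using hδ.nonneg 1
  · linarith [hδ.le_self n, hδ.sub_one_le (n + 1), (Nat.cast_succ (R := ℝ) n)]

lemma bounds_of_mem_roundSet (hδ : Signpost δ) {t : ℝ} {k : ℕ} (hk : k ∈ roundSet δ t) :
    δ k ≤ t ∧ t ≤ δ (k + 1) := by
  have hmono : δ k ≤ δ (k + 1) := hδ.monotone k.le_succ
  rcases hk with ⟨rfl, rfl⟩ | ⟨hlo, hhi⟩ | ⟨-, rfl | rfl⟩
  · exact ⟨hδ.1.le, hδ.nonneg 1⟩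
  · exact ⟨hlo.le, hhi.le⟩
  · exact ⟨le_rfl, hmono⟩
  · exact ⟨hmono, le_rfl⟩

end Signpost

lemma mem_roundSet_of_lt_of_lt {δ : ℕ → ℝ} {t : ℝ} {k : ℕ} (hlo : δ k < t)
    (hhi : t < δ (k + 1)) : k ∈ roundSet δ t :=
  Or.inr (Or.inl ⟨hlo, hhi⟩)

lemma mem_roundSet_self {δ : ℕ → ℝ} {k : ℕ} (hk : 0 < δ k) : k ∈ roundSet δ (δ k) :=
  Or.inr (Or.inr ⟨hk, Or.inl rfl⟩)

section BipropSolutions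

variable {δ : ℕ → ℝ} {n : ℕ} {P : Fin n → MType → ℝ} {J : Fin n → ℕ} {φ : MType → ℕ}
  {y : Fin n → MType → ℕ}

lemma sum_eq_add_of_mem_bipropSetNS (hy : y ∈ bipropSetNS δ P J φ) :
    ∑ i, J i = φ .f + φ .m := by
  obtain ⟨-, -, -, -, -, hrow, hcol⟩ := hy
  simp only [← hrow, sum_add_distrib, hcol]

lemma one_le_of_mem_bipropSetNS (hδ : Signpost δ) (hδ1 : δ 1 = 0) (hP : ∀ i t, 0 < P i t)
    (hy : y ∈ bipropSetNS δ P J φ) (i : Fin n) (t : MType) : 1 ≤ y i t := by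
  obtain ⟨lam, mu, hlam, hmu, hround, -, -⟩ := hy
  have hpos : 0 < P i t * lam i * mu t := mul_pos (mul_pos (hP i t) (hlam i)) (hmu t)
  by_contra! h
  have := (hδ.bounds_of_mem_roundSet (Nat.lt_one_iff.1 h ▸ hround i t)).2
  simp only [zero_add, hδ1] at this
  linarith

lemma exchange_le_of_mem_bipropSetNS (hδ : Signpost δ) (hP : ∀ i t, 0 ≤ P i t)
    (hy : y ∈ bipropSetNS δ P J φ) (i j : Fin n) {p q r s : ℕ}
    (hp : p ≤ y i .f) (hq : q ≤ y j .m) (hr : y i .m < r) (hs : y j .f < s) :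
    δ p * δ q * (P i .m * P j .f) ≤ δ r * δ s * (P i .f * P j .m) := by
  obtain ⟨lam, mu, hlam, hmu, hround, -, -⟩ := hy
  have bounds (i : Fin n) (t : MType) := hδ.bounds_of_mem_roundSet (hround i t)
  have h₁ : δ p ≤ P i .f * lam i * mu .f := (hδ.monotone hp).trans (bounds i .f).1
  have h₂ : δ q ≤ P j .m * lam j * mu .m := (hδ.monotone hq).trans (bounds j .m).1
  have h₃ : P i .m * lam i * mu .m ≤ δ r := (bounds i .m).2.trans (hδ.monotone hr)
  have h₄ : P j .f * lam j * mu .f ≤ δ s := (bounds j .f).2.trans (hδ.monotone hs)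
  have := hP i .m; have := hP j .f; have := hP i .f; have := hP j .m
  have := hlam i; have := hlam j; have := hmu .f; have := hmu .m
  have := hδ.nonneg q; have := hδ.nonneg r
  calc δ p * δ q * (P i .m * P j .f)
      ≤ (P i .f * lam i * mu .f) * (P j .m * lam j * mu .m) * (P i .m * P j .f) := by
        gcongr
    -- the cross products of the scaling factors agree
    _ = (P i .m * lam i * mu .m) * (P j .f * lam j * mu .f) * (P i .f * P j .m) := by ring
    _ ≤ δ r * δ s * (P i .f * P j .m) := by
        gcongr

end BipropSolutions

lemma isFairShare_self {n : ℕ} {P : Fin n → MType → ℝ} {J : Fin n → ℕ} {φ : MType → ℕ}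
    (hP : ∀ i t, 0 < P i t) (hrow : ∀ i, P i .f + P i .m = J i)
    (hcol : ∀ t, ∑ i, P i t = φ t) : IsFairShare P J φ P := by
  unfold IsFairShare
  exact ⟨fun _ => 1, fun _ => 1, fun _ => one_pos, fun _ => one_pos, hP, fun _ _ => by ring,
    hrow, hcol⟩

lemma one_div_le_card_violations_div {n : ℕ} (F : Fin n → MType → ℝ) (x : Fin n → MType → ℕ)
    (i : Fin n) (t : MType) (hit : ¬(⌊F i t⌋ ≤ (x i t : ℤ) ∧ (x i t : ℤ) ≤ ⌈F i t⌉)) :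
    (1 : ℝ) / n ≤ ((univ.filter fun i : Fin n =>
      ∃ t : MType, ¬(⌊F i t⌋ ≤ (x i t : ℤ) ∧ (x i t : ℤ) ≤ ⌈F i t⌉)).card : ℝ) / n := by
  gcongr
  exact Nat.one_le_cast.2 (card_pos.2 ⟨i, mem_filter.2 ⟨mem_univ i, t, hit⟩⟩)

def MType.pair {β : Type*} (a b : β) : MType → β
  | .f => a
  | .m => b

@[simp] lemma MType.pair_f {β : Type*} (a b : β) : MType.pair a b .f = a := rfl
@[simp] lemma MType.pair_m {β : Type*} (a b : β) : MType.pair a b .m = b := rfl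

def blockRows {β : Type*} (k : ℕ) (r₀ r : β) : Fin (k + 1) → β := Fin.cons r₀ fun _ => r

@[simp] lemma blockRows_zero {β : Type*} (k : ℕ) (r₀ r : β) : blockRows k r₀ r 0 = r₀ := rfl
@[simp] lemma blockRows_succ {β : Type*} (k : ℕ) (r₀ r : β) (j : Fin k) :
    blockRows k r₀ r j.succ = r := rfl

lemma eq_and_forall_eq_or_lt_and_exists_lt {k a c y₀ : ℕ} {y : Fin k → ℕ} (hle : ∀ j, y j ≤ c)
    (hsum : y₀ + ∑ j, y j = a + k * c) :
    (y₀ = a ∧ ∀ j, y j = c) ∨ (a < y₀ ∧ ∃ j, y j < c) := by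
  have hsum_le : ∑ j, y j ≤ ∑ _j : Fin k, c := sum_le_sum fun j _ => hle j
  simp only [sum_const, card_univ, Fintype.card_fin, smul_eq_mul] at hsum_le
  rcases hsum_le.eq_or_lt with heq | hlt
  · refine Or.inl ⟨by omega, fun j => ?_⟩
    have := (sum_eq_sum_iff_of_le (s := univ) (g := fun _ => c) fun j _ => hle j).1
      (by simpa using heq)
    exact this j (mem_univ j)
  · refine Or.inr ⟨by omega, ?_⟩
    obtain ⟨j, -, hj⟩ :=
      exists_lt_of_sum_lt (s := univ) (f := y) (g := fun _ => c) (by simpa using hlt)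
    exact ⟨j, hj⟩

lemma nine_mul_lt_of_inv_sq_add_one_le {d m : ℝ} (hd : 0 < d) (hm : d⁻¹ ^ 2 + 1 ≤ m) :
    9 * m < d ^ 2 * (3 * m - 1) ^ 2 := by
  have hm1 : 1 < m := by linarith [pow_pos (inv_pos.2 hd) 2]
  have hdm : 1 ≤ d ^ 2 * (m - 1) :=
    calc 1 = d ^ 2 * d⁻¹ ^ 2 := by field_simp
      _ ≤ d ^ 2 * (m - 1) := by gcongr; linarith
  nlinarith [sq_nonneg (3 * m - 1)]

namespace PosCase

variable (m : ℕ)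

noncomputable def P : Fin (m + 1) → MType → ℝ :=
  blockRows m (MType.pair 1 (3 * m - 1)) (MType.pair (3 - (m : ℝ)⁻¹) (m : ℝ)⁻¹)

def J : Fin (m + 1) → ℕ := blockRows m (3 * m) 3

def x : Fin (m + 1) → MType → ℕ := blockRows m (MType.pair 0 (3 * m)) (MType.pair 3 0)

variable {m}

lemma P_pos (hm : 0 < m) (i : Fin (m + 1)) (t : MType) : 0 < P m i t := by
  have hm' : (1 : ℝ) ≤ m := Nat.one_le_cast.2 hm
  have : (m : ℝ)⁻¹ ≤ 1 := inv_le_one_of_one_le₀ hm'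
  cases i using Fin.cases <;> cases t <;> simp [P] <;> linarith

lemma isFairShare (hm : 0 < m) : IsFairShare (P m) (J m) (fun _ => 3 * m) (P m) := by
  have hm' : (m : ℝ) ≠ 0 := Nat.cast_ne_zero.2 hm.ne'
  refine isFairShare_self (P_pos hm) (fun i => ?_) fun t => ?_
  · cases i using Fin.cases <;> simp [P, J]
  · cases t <;> simp [P, Fin.sum_univ_succ] <;> field_simp <;> ring

variable {δ : ℕ → ℝ}

lemma x_mem (hδ : Signpost δ) (hm : 0 < m) (hδm : 9 * m < δ 1 ^ 2 * (3 * m - 1) ^ 2) :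
    x m ∈ bipropSetNS δ (P m) (J m) (fun _ => 3 * m) := by
  have hm' : (1 : ℝ) ≤ m := Nat.one_le_cast.2 hm
  have hδ1 : 0 < δ 1 := (hδ.nonneg 1).lt_of_ne <| by rintro h; simp [← h] at hδm; linarith
  have hδ3 : δ 3 ≤ 3 := by exact_mod_cast hδ.le_self 3
  have hδ3m : δ (3 * m) ≤ 3 * m := by exact_mod_cast hδ.le_self (3 * m)
  have hδ3_pos : 0 < δ 3 := by have := hδ.sub_one_le 3; norm_num at this; linarith
  have hδ3m_pos : 0 < δ (3 * m) := by have := hδ.sub_one_le (3 * m); push_cast at this; linarith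
  set c : ℝ := 3 * m - 1 with hc
  have hc_pos : 0 < c := by linarith
  have hgap : δ 3 * δ (3 * m) / (c ^ 2 * δ 1) < δ 1 := by
    rw [div_lt_iff₀ (by positivity)]
    nlinarith [mul_le_mul hδ3 hδ3m hδ3m_pos.le (by norm_num)]
  obtain ⟨u, hu_lo, hu_hi⟩ := exists_between hgap
  have hu : 0 < u := lt_of_le_of_lt (by positivity) hu_lo
  refine ⟨blockRows m 1 (m * δ 3 / (c * u)), MType.pair u (δ (3 * m) / c), fun i => ?_,
    fun t => ?_, fun i t => ?_, fun i => ?_, fun t => ?_⟩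
  · cases i using Fin.cases <;> simp only [blockRows_zero, blockRows_succ] <;> positivity
  · cases t <;> simp only [MType.pair_f, MType.pair_m] <;> positivity
  · cases i using Fin.cases <;> cases t <;>
      simp only [P, x, blockRows_zero, blockRows_succ, MType.pair_f, MType.pair_m, ← hc]
    · exact mem_roundSet_of_lt_of_lt (by simpa [hδ.1]) (by simpa)
    · convert mem_roundSet_self hδ3m_pos using 2
      field_simp
    · convert mem_roundSet_self hδ3_pos using 2
      field_simp
      ring
    · refine mem_roundSet_of_lt_of_lt (by rw [hδ.1]; positivity) ?_
      rw [div_lt_iff₀ (by positivity)] at hu_lo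
      calc _ = δ 3 * δ (3 * m) / (c ^ 2 * u) := by field_simp
        _ < δ 1 := by rw [div_lt_iff₀ (by positivity)]; linarith
  · cases i using Fin.cases <;> simp [x, J]
  · cases t <;> simp [x, Fin.sum_univ_succ, mul_comm]

lemma eq_x_of_mem (hδ : Signpost δ) (hm : 0 < m) (hδm : 9 * m < δ 1 ^ 2 * (3 * m - 1) ^ 2)
    {y : Fin (m + 1) → MType → ℕ} (hy : y ∈ bipropSetNS δ (P m) (J m) (fun _ => 3 * m)) :
    y = x m := by
  obtain ⟨-, -, -, -, -, hrow, hcol⟩ := id hy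
  have hrow₀ : y 0 .f + y 0 .m = 3 * m := by simpa [J] using hrow 0
  have hrow_succ (j : Fin m) : y j.succ .f + y j.succ .m = 3 := by simpa [J] using hrow j.succ
  have hcol_f : y 0 .f + ∑ j : Fin m, y j.succ .f = 0 + m * 3 := by
    simpa [Fin.sum_univ_succ, mul_comm] using hcol .f
  rcases eq_and_forall_eq_or_lt_and_exists_lt (fun j => by linarith [hrow_succ j]) hcol_f with
    ⟨h₀, hsucc⟩ | ⟨h₀, j, hj⟩
  · funext i t
    cases i using Fin.cases with
    | zero => cases t <;> simp [x] <;> omega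
    | succ j => cases t <;> simp [x] <;> linarith [hrow_succ j, hsucc j]
  · have hm' : (0 : ℝ) < m := Nat.cast_pos.2 hm
    have hex := exchange_le_of_mem_bipropSetNS hδ (fun i t => (P_pos hm i t).le) hy 0 j.succ
      (p := 1) (q := 1) (r := 3 * m) (s := 3) (by omega) (by linarith [hrow_succ j])
      (by omega) hj
    simp only [P, blockRows_zero, blockRows_succ, MType.pair_f, MType.pair_m] at hex
    have hδ3 : δ 3 ≤ 3 := by exact_mod_cast hδ.le_self 3
    have hδ3m : δ (3 * m) ≤ 3 * m := by exact_mod_cast hδ.le_self (3 * m)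
    have : δ 1 ^ 2 * (3 * m - 1) ^ 2 ≤ δ (3 * m) * δ 3 := by
      have := mul_le_mul_of_nonneg_right hex hm'.le
      field_simp at this
      linarith
    nlinarith [mul_le_mul hδ3m hδ3 (hδ.nonneg 3) (by positivity)]

end PosCase

namespace ZeroCase

noncomputable def P : Fin 3 → MType → ℝ :=
  blockRows 2 (MType.pair 1 5) (MType.pair (5 / 2) (1 / 2))

def J : Fin 3 → ℕ := blockRows 2 6 3

def x : Fin 3 → MType → ℕ := blockRows 2 (MType.pair 2 4) (MType.pair 2 1)

lemma P_pos (i : Fin 3) (t : MType) : 0 < P i t := by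
  cases i using Fin.cases <;> cases t <;> simp [P]

lemma isFairShare : IsFairShare P J (fun _ => 6) P := by
  refine isFairShare_self P_pos (fun i => ?_) fun t => ?_
  · cases i using Fin.cases <;> simp [P, J] <;> norm_num
  · cases t <;> simp [P, Fin.sum_univ_succ] <;> norm_num

variable {δ : ℕ → ℝ}

lemma x_mem (hδ : Signpost δ) (hδ1 : δ 1 = 0) : x ∈ bipropSetNS δ P J (fun _ => 6) := by
  have hδ2 : 1 ≤ δ 2 := by have := hδ.sub_one_le 2; norm_num at this; linarith
  have hδ4 : 3 ≤ δ 4 := by have := hδ.sub_one_le 4; norm_num at this; linarith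
  have hδ4' : δ 4 ≤ 4 := by exact_mod_cast hδ.le_self 4
  refine ⟨blockRows 2 1 (2 / 5), MType.pair (δ 2) (δ 4 / 5), fun i => ?_, fun t => ?_,
    fun i t => ?_, fun i => ?_, fun t => ?_⟩
  · cases i using Fin.cases <;> simp
  · cases t <;> simp only [MType.pair_f, MType.pair_m] <;> positivity
  · cases i using Fin.cases <;> cases t <;>
      simp only [P, x, blockRows_zero, blockRows_succ, MType.pair_f, MType.pair_m]
    · convert mem_roundSet_self (by linarith : 0 < δ 2) using 2
      ring
    · convert mem_roundSet_self (by linarith : 0 < δ 4) using 2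
      ring
    · convert mem_roundSet_self (by linarith : 0 < δ 2) using 2
      ring
    · exact mem_roundSet_of_lt_of_lt (by rw [hδ1]; positivity) (by linarith)
  · cases i using Fin.cases <;> simp [x, J]
  · cases t <;> simp [x, Fin.sum_univ_succ]

lemma eq_x_of_mem (hδ : Signpost δ) (hδ1 : δ 1 = 0) {y : Fin 3 → MType → ℕ}
    (hy : y ∈ bipropSetNS δ P J (fun _ => 6)) : y = x := by
  obtain ⟨-, -, -, -, -, hrow, hcol⟩ := id hy
  have hone := one_le_of_mem_bipropSetNS hδ hδ1 P_pos hy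
  have hrow₀ : y 0 .f + y 0 .m = 6 := by simpa [J] using hrow 0
  have hrow_succ (j : Fin 2) : y j.succ .f + y j.succ .m = 3 := by simpa [J] using hrow j.succ
  have hcol_f : y 0 .f + ∑ j : Fin 2, y j.succ .f = 2 + 2 * 2 := by
    simpa [Fin.sum_univ_succ, -Fin.sum_univ_two] using hcol .f
  rcases eq_and_forall_eq_or_lt_and_exists_lt
      (fun j => by linarith [hrow_succ j, hone j.succ .m]) hcol_f with
    ⟨h₀, hsucc⟩ | ⟨h₀, j, hj⟩
  · funext i t
    cases i using Fin.cases with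
    | zero => cases t <;> simp [x] <;> omega
    | succ j => cases t <;> simp [x] <;> linarith [hrow_succ j, hsucc j]
  · have hex := exchange_le_of_mem_bipropSetNS hδ (fun i t => (P_pos i t).le) hy 0 j.succ
      (p := 3) (q := 2) (r := 4) (s := 2) (by omega) (by linarith [hrow_succ j]) (by omega) hj
    simp only [P, blockRows_zero, blockRows_succ, MType.pair_f, MType.pair_m] at hex
    have hδ2 : 1 ≤ δ 2 := by have := hδ.sub_one_le 2; norm_num at this; linarith
    have hδ3 : 2 ≤ δ 3 := by have := hδ.sub_one_le 3; norm_num at this; linarith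
    have hδ4 : δ 4 ≤ 4 := by exact_mod_cast hδ.le_self 4
    nlinarith

end ZeroCase

/-- lower bounds on the fraction of rows in which the unique
`δ`-biproportional solution violates the rounded fair share. -/
theorem stmt18 (δ : ℕ → ℝ) (hδ : Signpost δ) :
    (0 < δ 1 →
      ∃ (n : ℕ) (P : Fin n → MType → ℝ) (J : Fin n → ℕ) (φ : MType → ℕ)
        (F : Fin n → MType → ℝ) (x : Fin n → MType → ℕ),
        0 < n ∧ (∀ i t, 0 < P i t) ∧ ((∑ i, J i) = φ MType.f + φ MType.m) ∧
        φ MType.f = φ MType.m ∧ IsFairShare P J φ F ∧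
        bipropSetNS δ P J φ = {x} ∧
        (1 : ℝ) / (1 + (⌈(δ 1)⁻¹ ^ 2 + 1⌉₊ : ℝ)) ≤
          ((univ.filter fun i : Fin n =>
              ∃ t : MType, ¬(⌊F i t⌋ ≤ (x i t : ℤ) ∧ (x i t : ℤ) ≤ ⌈F i t⌉)).card : ℝ) / n) ∧
    (δ 1 = 0 →
      ∃ (P : Fin 3 → MType → ℝ) (J : Fin 3 → ℕ) (φ : MType → ℕ)
        (F : Fin 3 → MType → ℝ) (x : Fin 3 → MType → ℕ),
        (∀ i t, 0 < P i t) ∧ ((∑ i, J i) = φ MType.f + φ MType.m) ∧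
        φ MType.f = φ MType.m ∧ IsFairShare P J φ F ∧
        bipropSetNS δ P J φ = {x} ∧
        (1 : ℝ) / 3 ≤
          ((univ.filter fun i : Fin 3 =>
              ∃ t : MType, ¬(⌊F i t⌋ ≤ (x i t : ℤ) ∧ (x i t : ℤ) ≤ ⌈F i t⌉)).card : ℝ) / 3) := by
  constructor
  · intro hδ1
    set m := ⌈(δ 1)⁻¹ ^ 2 + 1⌉₊
    have hm_le : (δ 1)⁻¹ ^ 2 + 1 ≤ (m : ℝ) := Nat.le_ceil _
    have hm : 0 < m := (Nat.cast_pos (α := ℝ)).1 (by linarith [sq_nonneg (δ 1)⁻¹])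
    have hδm := nine_mul_lt_of_inv_sq_add_one_le hδ1 hm_le
    have hx := PosCase.x_mem hδ hm hδm
    refine ⟨m + 1, PosCase.P m, PosCase.J m, fun _ => 3 * m, PosCase.P m, PosCase.x m, m.succ_pos,
      PosCase.P_pos hm, sum_eq_add_of_mem_bipropSetNS hx, rfl, PosCase.isFairShare hm,
      Set.eq_singleton_iff_unique_mem.2 ⟨hx, fun y hy => PosCase.eq_x_of_mem hδ hm hδm hy⟩, ?_⟩
    rw [add_comm, ← Nat.cast_add_one]
    exact one_div_le_card_violations_div _ _ 0 .f (by simp [PosCase.P, PosCase.x])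
  · intro hδ1
    have hx := ZeroCase.x_mem hδ hδ1
    refine ⟨ZeroCase.P, ZeroCase.J, fun _ => 6, ZeroCase.P, ZeroCase.x, ZeroCase.P_pos,
      sum_eq_add_of_mem_bipropSetNS hx, rfl, ZeroCase.isFairShare,
      Set.eq_singleton_iff_unique_mem.2 ⟨hx, fun y hy => ZeroCase.eq_x_of_mem hδ hδ1 hy⟩, ?_⟩
    exact_mod_cast one_div_le_card_violations_div _ _ 0 .f (by simp [ZeroCase.P, ZeroCase.x])
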